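/- The monomial ideal L(λ) is a lexicographic ideal: for every integer j ≥ 0 and every pair of monomials u, v ∈ R of degree j, if u ∈ L(λ) and v is greater than u in the lexicographic order on monomials determined by x_0 > x_1 > ⋯ > x_m, then v ∈ L(λ). -/

import Mathlib

open MvPolynomial

noncomputable section

/-- `a_j`: the number of parts of the partition `l 1 ≥ l 2 ≥ ⋯ ≥ l r` equal to `j`. -/
def partCount (r : ℕ) (l : ℕ → ℕ) (j : ℕ) : ℕ :=
  ((Finset.Icc 1 r).filter fun i => l i = j).card

open Fin.NatCast in
/-- The generators of the lexicographic ideal `L(λ)`. -/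
def lexGens (k : Type*) [Field k] (m r : ℕ) (l : ℕ → ℕ) :
    Set (MvPolynomial (Fin (m + 1)) k) :=
  { f | ∃ kk : ℕ, kk + 2 ≤ m ∧
      f = (∏ t ∈ Finset.range kk, X ((t : ℕ) : Fin (m + 1)) ^ partCount r l (m - t)) *
            X ((kk : ℕ) : Fin (m + 1)) ^ (partCount r l (m - kk) + 1) }
  ∪ { (∏ t ∈ Finset.range (m - 1), X ((t : ℕ) : Fin (m + 1)) ^ partCount r l (m - t)) *
        X (((m - 1 : ℕ)) : Fin (m + 1)) ^ partCount r l 1 }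

/-- The lexicographic ideal `L(λ)` associated to the partition `λ`. -/
def lexIdeal (k : Type*) [Field k] (m r : ℕ) (l : ℕ → ℕ) :
    Ideal (MvPolynomial (Fin (m + 1)) k) :=
  Ideal.span (lexGens k m r l)

/-- The exponent vector `c` is lexicographically greater than `b` (with `x_0 > x_1 > ⋯ > x_m`):
the first nonzero entry of `c − b` is positive. -/
def LexGreater {m : ℕ} (c b : Fin (m + 1) →₀ ℕ) : Prop :=
  ∃ t : Fin (m + 1), (∀ s : Fin (m + 1), s < t → c s = b s) ∧ b t < c t

/-!
A monomial `x^c` lies in `L(λ)` exactly when its truncated exponent vector `(c_0, …, c_{m-1})` is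
lexicographically at least `α = (a_m, a_{m-1}, …, a_1)`: the generators are the vectors agreeing
with `α` before some position `k ≤ m - 2` and exceeding it by one at `k`, together with `α` itself
(position `m - 1` needs no generator of its own, being dominated by `α`). Dropping the last
coordinate turns a strict lexicographic inequality into a weak one, so the lex-segment property
follows by transitivity.
-/

open Fin.NatCast

section

variable {ι β : Type*} [LinearOrder ι] [WellFoundedLT ι] [LinearOrder β]

theorem toLex_le_toLex_iff_forall_le_or_exists_lt {a b : ι → β} :
    toLex a ≤ toLex b ↔ (∀ i, a i ≤ b i) ∨ ∃ i, (∀ j < i, a j ≤ b j) ∧ a i < b i := by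
  refine ⟨fun h => ?_, fun h => not_lt.mp ?_⟩
  · obtain h | ⟨i, heq, hlt⟩ := h.eq_or_lt
    · exact .inl fun i => (congrFun h i).le
    · exact .inr ⟨i, fun j hj => (heq j hj).le, hlt⟩
  · rintro ⟨i, heq, hlt⟩
    obtain hle | ⟨K, hle, hK⟩ := h
    · exact (hle i).not_gt hlt
    obtain hiK | rfl | hKi := lt_trichotomy i K
    · exact (hle i hiK).not_gt hlt
    · exact hK.not_gt hlt
    · exact hK.ne' (heq K hKi)

end

theorem toLex_init_le_of_lt {n : ℕ} {β : Type*} [LinearOrder β] {b c : Fin (n + 1) → β}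
    (h : toLex b < toLex c) : toLex (Fin.init b) ≤ toLex (Fin.init c) := by
  obtain ⟨i, heq, hlt⟩ := h
  induction i using Fin.lastCases with
  | last => exact (congrArg toLex (funext fun j => heq _ j.castSucc_lt_last)).le
  | cast i => exact (show toLex (Fin.init b) < toLex (Fin.init c) from
      ⟨i, fun j hj => heq _ (Fin.castSucc_lt_castSucc_iff.mpr hj), hlt⟩).le

theorem lexGreater_iff_toLex_lt {m : ℕ} {c b : Fin (m + 1) →₀ ℕ} :
    LexGreater c b ↔ toLex ⇑b < toLex ⇑c := by
  simp only [LexGreater, eq_comm (a := c _)]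
  rfl

def prefixExp (m : ℕ) (n : ℕ → ℕ) (K p : ℕ) : Fin (m + 1) →₀ ℕ :=
  ∑ t ∈ Finset.range K, Finsupp.single (t : Fin (m + 1)) (n t) +
    Finsupp.single (K : Fin (m + 1)) p

theorem prefixExp_apply {m K : ℕ} (hK : K ≤ m) (n : ℕ → ℕ) (p : ℕ) (s : Fin (m + 1)) :
    prefixExp m n K p s = if (s : ℕ) < K then n s else if (s : ℕ) = K then p else 0 := by
  have hKv : ((K : Fin (m + 1)) : ℕ) = K := Fin.val_cast_of_lt (Nat.lt_succ_of_le hK)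
  have sum_apply : (∑ t ∈ Finset.range K, Finsupp.single (t : Fin (m + 1)) (n t)) s =
      ∑ t ∈ Finset.range K, if t = (s : ℕ) then n t else 0 := by
    rw [Finsupp.finsetSum_apply]
    refine Finset.sum_congr rfl fun t ht => ?_
    have ht : t < m + 1 := by rw [Finset.mem_range] at ht; omega
    simp only [Finsupp.single_apply, Fin.ext_iff, Fin.val_cast_of_lt ht]
  rw [prefixExp, Finsupp.add_apply, sum_apply, Finset.sum_ite_eq']
  simp only [Finset.mem_range, Finsupp.single_apply, Fin.ext_iff, hKv]
  split_ifs <;> omega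

theorem prefixExp_le_iff {m K : ℕ} (hK : K ≤ m) (n : ℕ → ℕ) (p : ℕ) (c : Fin (m + 1) →₀ ℕ) :
    prefixExp m n K p ≤ c ↔ (∀ t < K, n t ≤ c t) ∧ p ≤ c K := by
  simp only [Finsupp.le_def, prefixExp_apply hK]
  refine ⟨fun h => ⟨fun t ht => ?_, ?_⟩, fun ⟨hlt, hK⟩ s => ?_⟩
  · simpa [Fin.val_cast_of_lt (show t < m + 1 by omega), ht] using h t
  · simpa [Fin.val_cast_of_lt (Nat.lt_succ_of_le hK)] using h K
  · split_ifs with hs hs'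
    · simpa using hlt s hs
    · simpa [← hs', Fin.cast_val_eq_self] using hK
    · exact Nat.zero_le _

theorem prod_X_pow_mul_X_pow_eq_monomial {k : Type*} [CommSemiring k] (m : ℕ) (n : ℕ → ℕ)
    (K p : ℕ) :
    (∏ t ∈ Finset.range K, (X (t : Fin (m + 1)) : MvPolynomial (Fin (m + 1)) k) ^ n t) *
        X (K : Fin (m + 1)) ^ p = monomial (prefixExp m n K p) 1 := by
  simp only [X_pow_eq_monomial]
  rw [prefixExp, ← monomial_sum_one, monomial_mul, mul_one]

theorem lexGens_eq (k : Type*) [Field k] (m r : ℕ) (l : ℕ → ℕ) :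
    lexGens k m r l = (fun d => monomial d (1 : k)) ''
      ((fun K => prefixExp m (fun t => partCount r l (m - t)) K (partCount r l (m - K) + 1)) ''
          {K | K + 2 ≤ m} ∪
        {prefixExp m (fun t => partCount r l (m - t)) (m - 1) (partCount r l 1)}) := by
  simp only [lexGens, prod_X_pow_mul_X_pow_eq_monomial, Set.image_union, Set.image_image,
    Set.image_singleton]
  ext f
  simp [eq_comm]

theorem monomial_mem_lexIdeal_iff_exists {k : Type*} [Field k] {m r : ℕ} {l : ℕ → ℕ}
    (c : Fin (m + 1) →₀ ℕ) :
    monomial c (1 : k) ∈ lexIdeal k m r l ↔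
      (∃ K, K + 2 ≤ m ∧ (∀ t < K, partCount r l (m - t) ≤ c t) ∧
          partCount r l (m - K) + 1 ≤ c K) ∨
        ((∀ t < m - 1, partCount r l (m - t) ≤ c t) ∧ partCount r l 1 ≤ c (m - 1 : ℕ)) := by
  classical
  rw [lexIdeal, lexGens_eq, mem_ideal_span_monomial_image, support_monomial,
    if_neg one_ne_zero]
  simp only [Finset.mem_singleton, forall_eq, Set.mem_union, Set.mem_image, Set.mem_ofPred_eq,
    Set.mem_singleton_iff, exists_exists_and_eq_and, or_and_right, exists_or, exists_eq_left]
  rw [prefixExp_le_iff (Nat.sub_le m 1)]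
  exact or_congr_left <| exists_congr fun K =>
    and_congr_right fun hK => prefixExp_le_iff (by omega) ..

theorem monomial_mem_lexIdeal_iff {k : Type*} [Field k] {m r : ℕ} (hm : 1 ≤ m) (l : ℕ → ℕ)
    (c : Fin (m + 1) →₀ ℕ) :
    monomial c (1 : k) ∈ lexIdeal k m r l ↔
      toLex (fun i : Fin m => partCount r l (m - i)) ≤ toLex (Fin.init ⇑c) := by
  obtain ⟨n, rfl⟩ := Nat.exists_eq_add_of_le' hm
  have hall : ((∀ t < n, partCount r l (n + 1 - t) ≤ c t) ∧ partCount r l 1 ≤ c n) ↔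
      ∀ i : Fin (n + 1), partCount r l (n + 1 - i) ≤ c (i : ℕ) := by
    simp only [Fin.forall_iff, Nat.forall_lt_succ_right, Nat.add_sub_cancel_left]
  rw [monomial_mem_lexIdeal_iff_exists, toLex_le_toLex_iff_forall_le_or_exists_lt,
    Nat.add_sub_cancel, hall]
  simp only [Fin.init, ← Fin.coe_eq_castSucc]
  constructor
  · rintro (⟨K, hK, hlt, hKlt⟩ | hle)
    · exact .inr ⟨⟨K, by omega⟩, fun j hj => hlt j hj, hKlt⟩
    · exact .inl hle
  · rintro (hle | ⟨i, hlt, hilt⟩)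
    · exact .inr hle
    by_cases hi : (i : ℕ) + 2 ≤ n + 1
    · exact .inl ⟨i, hi, fun t ht => hlt ⟨t, by omega⟩ ht, hilt⟩
    · refine .inr fun j => (lt_or_eq_of_le (show j ≤ i by omega)).elim (hlt j) ?_
      rintro rfl
      exact hilt.le

theorem lexIdeal_isLex_general (k : Type*) [Field k] (m r : ℕ)
    (hm : 1 ≤ m) (l : ℕ → ℕ) :
    ∀ (j : ℕ) (b c : Fin (m + 1) →₀ ℕ),
      (b.sum fun _ e => e) = j → (c.sum fun _ e => e) = j →
      monomial b (1 : k) ∈ lexIdeal k m r l → LexGreater c b →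
      monomial c (1 : k) ∈ lexIdeal k m r l := by
  intro j b c _ _ hb hlex
  rw [monomial_mem_lexIdeal_iff hm] at hb ⊢
  exact hb.trans (toLex_init_le_of_lt (lexGreater_iff_toLex_lt.mp hlex))

/-- The monomial ideal `L(λ)` is a lexicographic ideal: for every degree `j`
and every pair of monomials `u, v` of degree `j`, if `u ∈ L(λ)` and `v > u` in the
lexicographic order, then `v ∈ L(λ)`. -/
theorem lexIdeal_isLex (k : Type*) [Field k] (m r : ℕ)
    (hm : 1 ≤ m) (hr : 1 ≤ r) (l : ℕ → ℕ)
    (hanti : AntitoneOn l (Set.Icc 1 r)) (hpos : ∀ i ∈ Set.Icc 1 r, 1 ≤ l i)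
    (hle : l 1 ≤ m) :
    ∀ (j : ℕ) (b c : Fin (m + 1) →₀ ℕ),
      (b.sum fun _ e => e) = j → (c.sum fun _ e => e) = j →
      monomial b (1 : k) ∈ lexIdeal k m r l → LexGreater c b →
      monomial c (1 : k) ∈ lexIdeal k m r l :=
  lexIdeal_isLex_general k m r hm l

end
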